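/- In the ReLU-network setting, for every θ ∈ Θ the gradient estimator is unbiased: for every parameter component θ^k (an entry of some W_i or b_i), the partial derivative ∂/∂θ^k of θ ↦ E_z[f(θ, z)] exists and equals E_z[∂f/∂θ^k(θ, z)]. -/

import Mathlib

/-!
Fix `θ` and a direction `v`. On the unit ball around `θ`, induction over the layers (ReLU being
1-Lipschitz) gives `‖x_i‖ ≤ C (1 + ‖z‖)` and a Lipschitz constant `L (1 + ‖z‖)` in the parameters,
so the loss is Lipschitz there with constant `O((1 + ‖z‖)² + (1 + ‖z‖) ‖f̂(z)‖²)`, which is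
integrable by the Gaussian second moments and the moment hypotheses on `f̂`. Where no hidden
preactivation vanishes ReLU is locally affine, so the loss is differentiable in `θ` for a.e. `z`,
and dominated differentiation under the integral sign (Lipschitz version) gives the claim.
-/

open MeasureTheory
open scoped BigOperators

noncomputable section

/-- Parameter space of an `n`-layer fully connected network with layer widths `κ`:
for each layer `i` a weight matrix `W_i ∈ ℝ^{κ(i+1) × κ i}` and a bias `b_i ∈ ℝ^{κ(i+1)}`. -/
abbrev NNParams (κ : ℕ → ℕ) (n : ℕ) :=
  (i : Fin n) → ((Fin (κ (i.1 + 1)) → Fin (κ i.1) → ℝ) × (Fin (κ (i.1 + 1)) → ℝ))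

/-- The layers of the ReLU network: `x₀ = z`, `x_{i+1} = max(0, W_{i+1} x_i + b_{i+1})`
entrywise for the hidden layers `i + 1 ≤ n - 1`, and the affine output layer
`x_n = W_n x_{n-1} + b_n` (junk value `0` beyond layer `n`). -/
def reluNet (κ : ℕ → ℕ) (n : ℕ) (θ : NNParams κ n) (z : Fin (κ 0) → ℝ) :
    (i : ℕ) → Fin (κ i) → ℝ
  | 0 => z
  | (i + 1) =>
    if h : i < n then
      fun j =>
        let pre := (∑ l, (θ ⟨i, h⟩).1 j l * reluNet κ n θ z i l) + (θ ⟨i, h⟩).2 j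
        if i + 2 ≤ n then max 0 pre else pre
    else 0

/-- Squared-error loss `f(θ,z) = ‖x_n(θ,z) − f̂(z)‖²` of the ReLU network. -/
def reluLoss (κ : ℕ → ℕ) (n : ℕ) (fhat : (Fin (κ 0) → ℝ) → (Fin (κ n) → ℝ))
    (θ : NNParams κ n) (z : Fin (κ 0) → ℝ) : ℝ :=
  ∑ j, (reluNet κ n θ z n j - fhat z j) ^ 2

/-- The standard Gaussian measure on `ℝ^d` (i.i.d. `N(0,1)` coordinates). -/
def stdGaussian (d : ℕ) : Measure (Fin d → ℝ) :=
  Measure.pi fun _ => ProbabilityTheory.gaussianReal 0 1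

/-- `θ` gives a.e. nonzero hidden-layer preactivations: for a.e. input `z`, every
hidden-layer preactivation `W_i^j x_{i-1} + b_i^j` is nonzero (so that `∇_θ f(θ,z)`
exists for a.e. `z`). -/
def NonzeroPreact (κ : ℕ → ℕ) (n : ℕ) (θ : NNParams κ n) : Prop :=
  ∀ᵐ z ∂(stdGaussian (κ 0)), ∀ (i : ℕ) (h : i < n), i + 2 ≤ n →
    ∀ j : Fin (κ (i + 1)),
      (∑ l, (θ ⟨i, h⟩).1 j l * reluNet κ n θ z i l) + (θ ⟨i, h⟩).2 j ≠ 0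

open Filter Topology

section DerivIntegral

variable {α E G : Type*} [MeasurableSpace α] {μ : Measure α}
  [NormedAddCommGroup E] [NormedSpace ℝ E] [NormedAddCommGroup G] [NormedSpace ℝ G]

theorem aestronglyMeasurable_of_hasDerivAt_ae {F : ℝ → α → G} {F' : α → G} {t₀ : ℝ}
    (hF : ∀ t, AEStronglyMeasurable (F t) μ)
    (hF' : ∀ᵐ a ∂μ, HasDerivAt (F · a) (F' a) t₀) :
    AEStronglyMeasurable F' μ := by
  have hu : Tendsto (fun m : ℕ => t₀ + 1 / ((m : ℝ) + 1)) atTop (𝓝[≠] t₀) := by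
    refine tendsto_nhdsWithin_of_tendsto_nhds_of_eventually_within _ ?_
      (Eventually.of_forall fun m => ?_)
    · simpa using (tendsto_one_div_add_atTop_nhds_zero_nat (𝕜 := ℝ)).const_add t₀
    · simp only [Set.mem_compl_iff, Set.mem_singleton_iff, add_eq_left]
      positivity
  refine aestronglyMeasurable_of_tendsto_ae atTop
    (f := fun (m : ℕ) a => slope (F · a) t₀ (t₀ + 1 / ((m : ℝ) + 1))) (fun m => ?_) ?_
  · simp only [slope_def_module]
    exact ((hF _).sub (hF _)).const_smul _
  · filter_upwards [hF'] with a ha using (hasDerivAt_iff_tendsto_slope.mp ha).comp hu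

theorem hasLineDerivAt_integral_of_dominated_loc_of_lip [CompleteSpace G]
    {F : E → α → G} {x v : E} {s : Set E} {bound : α → ℝ} (hs : s ∈ 𝓝 x)
    (hF_meas : ∀ y, AEStronglyMeasurable (F y) μ) (hF_int : Integrable (F x) μ)
    (h_lip : ∀ᵐ a ∂μ, LipschitzOnWith (Real.nnabs (bound a)) (F · a) s)
    (bound_integrable : Integrable bound μ)
    (h_diff : ∀ᵐ a ∂μ, LineDifferentiableAt ℝ (F · a) x v) :
    HasLineDerivAt ℝ (fun y => ∫ a, F y a ∂μ) (∫ a, lineDeriv ℝ (F · a) x v ∂μ) x v := by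
  have hline : LipschitzWith ‖v‖₊ fun t : ℝ => x + t • v :=
    LipschitzWith.of_dist_le_mul fun t t' => by
      rw [dist_add_left, dist_eq_norm, ← sub_smul, norm_smul, Real.dist_eq, mul_comm,
        coe_nnnorm, Real.norm_eq_abs]
  have hs' : (fun t : ℝ => x + t • v) ⁻¹' s ∈ 𝓝 0 :=
    hline.continuous.continuousAt.preimage_mem_nhds (by simpa using hs)
  have h_deriv : ∀ᵐ a ∂μ, HasDerivAt (fun t : ℝ => F (x + t • v) a) (lineDeriv ℝ (F · a) x v) 0 :=
    h_diff.mono fun a ha => ha.hasLineDerivAt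
  refine (hasDerivAt_integral_of_dominated_loc_of_lip hs'
    (Eventually.of_forall fun t => hF_meas _) (by simpa using hF_int)
    (aestronglyMeasurable_of_hasDerivAt_ae (fun t => hF_meas _) h_deriv) ?_
    (bound_integrable.mul_const ‖v‖) h_deriv).2
  filter_upwards [h_lip] with a ha
  convert ha.comp hline.lipschitzOnWith (Set.mapsTo_preimage _ _) using 1
  · ext
    simp only [Real.coe_nnabs, NNReal.coe_mul, coe_nnnorm, abs_mul, abs_norm]
  · rfl

end DerivIntegral

section Gaussian

instance (d : ℕ) : IsProbabilityMeasure (stdGaussian d) :=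
  Measure.pi.instIsProbabilityMeasure _

lemma memLp_id_stdGaussian (d : ℕ) : MemLp id 2 (stdGaussian d) :=
  memLp_pi_iff.2 fun k =>
    (ProbabilityTheory.memLp_id_gaussianReal (μ := 0) (v := 1) 2).comp_measurePreserving
      (measurePreserving_eval _ k)

lemma integrable_one_add_norm_sq_stdGaussian (d : ℕ) :
    Integrable (fun z => (1 + ‖z‖) ^ 2) (stdGaussian d) := by
  have h : MemLp (fun z => 1 + ‖z‖) 2 (stdGaussian d) :=
    (memLp_const (1 : ℝ)).add (memLp_id_stdGaussian d).norm
  exact h.integrable_sq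

lemma norm_le_sum_abs {d : ℕ} (z : Fin d → ℝ) : ‖z‖ ≤ ∑ k, |z k| :=
  (pi_norm_le_iff_of_nonneg (Finset.sum_nonneg fun _ _ => abs_nonneg _)).2 fun k =>
    Finset.single_le_sum (f := fun k => |z k|) (fun _ _ => abs_nonneg _) (Finset.mem_univ k)

lemma integrable_one_add_norm_mul {d : ℕ} {μ : Measure (Fin d → ℝ)} {Q : (Fin d → ℝ) → ℝ}
    (hQ : 0 ≤ Q) (hQ_int : Integrable Q μ) (hQ_abs : ∀ k, Integrable (fun z => Q z * |z k|) μ) :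
    Integrable (fun z => (1 + ‖z‖) * Q z) μ := by
  have hnorm : Integrable (fun z => ‖z‖ * Q z) μ := by
    refine (integrable_finsetSum Finset.univ fun k _ => hQ_abs k).mono'
      (continuous_norm.aestronglyMeasurable.mul hQ_int.aestronglyMeasurable)
      (ae_of_all _ fun z => ?_)
    rw [Real.norm_eq_abs, abs_of_nonneg (mul_nonneg (norm_nonneg z) (hQ z)), ← Finset.mul_sum,
      mul_comm]
    exact mul_le_mul_of_nonneg_left (norm_le_sum_abs z) (hQ z)
  exact (hQ_int.add hnorm).congr (ae_of_all _ fun z => by simp only [Pi.add_apply]; ring)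

end Gaussian

section Network

variable {κ : ℕ → ℕ} {n : ℕ}

def reluPreact (θ : NNParams κ n) (z : Fin (κ 0) → ℝ) (i : ℕ) (h : i < n)
    (j : Fin (κ (i + 1))) : ℝ :=
  (∑ l, (θ ⟨i, h⟩).1 j l * reluNet κ n θ z i l) + (θ ⟨i, h⟩).2 j

lemma reluNet_zero (θ : NNParams κ n) (z : Fin (κ 0) → ℝ) : reluNet κ n θ z 0 = z := rfl

lemma reluNet_succ_of_lt (θ : NNParams κ n) (z : Fin (κ 0) → ℝ) {i : ℕ} (h : i < n)
    (j : Fin (κ (i + 1))) :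
    reluNet κ n θ z (i + 1) j =
      if i + 2 ≤ n then max 0 (reluPreact θ z i h j) else reluPreact θ z i h j := by
  simp only [reluNet, dif_pos h, reluPreact]

lemma reluNet_succ_of_not_lt (θ : NNParams κ n) (z : Fin (κ 0) → ℝ) {i : ℕ} (h : ¬i < n) :
    reluNet κ n θ z (i + 1) = 0 := by
  simp only [reluNet, dif_neg h]

lemma abs_reluNet_succ_le (θ : NNParams κ n) (z : Fin (κ 0) → ℝ) {i : ℕ} (h : i < n)
    (j : Fin (κ (i + 1))) : |reluNet κ n θ z (i + 1) j| ≤ |reluPreact θ z i h j| := by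
  rw [reluNet_succ_of_lt θ z h]
  split_ifs
  · rw [abs_of_nonneg (le_max_left _ _)]
    exact max_le (abs_nonneg _) (le_abs_self _)
  · exact le_rfl

lemma abs_reluNet_succ_sub_le (θ₁ θ₂ : NNParams κ n) (z : Fin (κ 0) → ℝ) {i : ℕ} (h : i < n)
    (j : Fin (κ (i + 1))) :
    |reluNet κ n θ₁ z (i + 1) j - reluNet κ n θ₂ z (i + 1) j|
      ≤ |reluPreact θ₁ z i h j - reluPreact θ₂ z i h j| := by
  rw [reluNet_succ_of_lt θ₁ z h, reluNet_succ_of_lt θ₂ z h]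
  split_ifs
  · simpa only [max_comm (0 : ℝ)] using abs_max_sub_max_le_abs _ _ 0
  · exact le_rfl

lemma abs_weight_le_norm (θ : NNParams κ n) (i : Fin n) (j : Fin (κ (i.1 + 1)))
    (l : Fin (κ i.1)) : |(θ i).1 j l| ≤ ‖θ‖ :=
  (norm_le_pi_norm ((θ i).1 j) l).trans <| (norm_le_pi_norm _ j).trans <|
    (norm_fst_le _).trans (norm_le_pi_norm θ i)

lemma abs_bias_le_norm (θ : NNParams κ n) (i : Fin n) (j : Fin (κ (i.1 + 1))) :
    |(θ i).2 j| ≤ ‖θ‖ :=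
  (norm_le_pi_norm (θ i).2 j).trans <| (norm_snd_le _).trans (norm_le_pi_norm θ i)

lemma abs_sum_mul_le {k : ℕ} (w x : Fin k → ℝ) {c : ℝ} (hw : ∀ l, |w l| ≤ c) :
    |∑ l, w l * x l| ≤ k * c * ‖x‖ :=
  calc |∑ l, w l * x l| ≤ ∑ l, |w l| * |x l| := by
        simpa only [abs_mul] using Finset.abs_sum_le_sum_abs (fun l => w l * x l) Finset.univ
    _ ≤ ∑ _l : Fin k, c * ‖x‖ := Finset.sum_le_sum fun l _ =>
        mul_le_mul (hw l) (norm_le_pi_norm x l) (abs_nonneg _) ((abs_nonneg _).trans (hw l))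
    _ = k * c * ‖x‖ := by simp [mul_assoc]

lemma abs_reluPreact_le (θ : NNParams κ n) (z : Fin (κ 0) → ℝ) {i : ℕ} (h : i < n)
    (j : Fin (κ (i + 1))) :
    |reluPreact θ z i h j| ≤ κ i * ‖θ‖ * ‖reluNet κ n θ z i‖ + ‖θ‖ :=
  (abs_add_le _ _).trans <| add_le_add
    (abs_sum_mul_le _ _ fun l => abs_weight_le_norm θ ⟨i, h⟩ j l) (abs_bias_le_norm θ ⟨i, h⟩ j)

lemma abs_reluPreact_sub_le (θ₁ θ₂ : NNParams κ n) (z : Fin (κ 0) → ℝ) {i : ℕ} (h : i < n)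
    (j : Fin (κ (i + 1))) :
    |reluPreact θ₁ z i h j - reluPreact θ₂ z i h j|
      ≤ κ i * (‖θ₁ - θ₂‖ * ‖reluNet κ n θ₁ z i‖
          + ‖θ₂‖ * ‖reluNet κ n θ₁ z i - reluNet κ n θ₂ z i‖) + ‖θ₁ - θ₂‖ := by
  have hsplit : reluPreact θ₁ z i h j - reluPreact θ₂ z i h j
      = (∑ l, ((θ₁ - θ₂) ⟨i, h⟩).1 j l * reluNet κ n θ₁ z i l
        + ∑ l, (θ₂ ⟨i, h⟩).1 j l * (reluNet κ n θ₁ z i - reluNet κ n θ₂ z i) l)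
        + ((θ₁ - θ₂) ⟨i, h⟩).2 j := by
    simp only [reluPreact, Pi.sub_apply, Prod.fst_sub, Prod.snd_sub, sub_mul, mul_sub,
      Finset.sum_sub_distrib]
    ring
  rw [hsplit, mul_add, ← mul_assoc, ← mul_assoc]
  refine (abs_add_le _ _).trans (add_le_add ((abs_add_le _ _).trans (add_le_add ?_ ?_)) ?_)
  · exact abs_sum_mul_le _ _ fun l => abs_weight_le_norm (θ₁ - θ₂) ⟨i, h⟩ j l
  · exact abs_sum_mul_le _ _ fun l => abs_weight_le_norm θ₂ ⟨i, h⟩ j l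
  · exact abs_bias_le_norm (θ₁ - θ₂) ⟨i, h⟩ j

lemma norm_reluNet_succ_le {M : ℝ} {θ : NNParams κ n} (hθ : ‖θ‖ ≤ M) (z : Fin (κ 0) → ℝ)
    (i : ℕ) : ‖reluNet κ n θ z (i + 1)‖ ≤ κ i * M * ‖reluNet κ n θ z i‖ + M := by
  have hM : 0 ≤ M := (norm_nonneg θ).trans hθ
  have hrhs : 0 ≤ κ i * M * ‖reluNet κ n θ z i‖ + M := by positivity
  by_cases h : i < n
  · refine (pi_norm_le_iff_of_nonneg hrhs).2 fun j => ?_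
    refine (abs_reluNet_succ_le θ z h j).trans <| (abs_reluPreact_le θ z h j).trans ?_
    gcongr
  · simpa [reluNet_succ_of_not_lt θ z h] using hrhs

lemma norm_reluNet_succ_sub_le {M : ℝ} (θ₁ : NNParams κ n) {θ₂ : NNParams κ n}
    (h₂ : ‖θ₂‖ ≤ M) (z : Fin (κ 0) → ℝ) (i : ℕ) :
    ‖reluNet κ n θ₁ z (i + 1) - reluNet κ n θ₂ z (i + 1)‖
      ≤ κ i * (‖θ₁ - θ₂‖ * ‖reluNet κ n θ₁ z i‖
          + M * ‖reluNet κ n θ₁ z i - reluNet κ n θ₂ z i‖) + ‖θ₁ - θ₂‖ := by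
  have hM : 0 ≤ M := (norm_nonneg θ₂).trans h₂
  have hrhs : 0 ≤ κ i * (‖θ₁ - θ₂‖ * ‖reluNet κ n θ₁ z i‖
      + M * ‖reluNet κ n θ₁ z i - reluNet κ n θ₂ z i‖) + ‖θ₁ - θ₂‖ := by positivity
  by_cases h : i < n
  · refine (pi_norm_le_iff_of_nonneg hrhs).2 fun j => ?_
    refine (abs_reluNet_succ_sub_le θ₁ θ₂ z h j).trans <|
      (abs_reluPreact_sub_le θ₁ θ₂ z h j).trans ?_
    gcongr
  · simpa [reluNet_succ_of_not_lt _ z h] using hrhs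

lemma exists_norm_reluNet_le (M : ℝ) (i : ℕ) :
    ∃ C, ∀ θ : NNParams κ n, ‖θ‖ ≤ M → ∀ z, ‖reluNet κ n θ z i‖ ≤ C * (1 + ‖z‖) := by
  induction i with
  | zero => exact ⟨1, fun θ _ z => by simp [reluNet_zero]⟩
  | succ i ih =>
    obtain ⟨C, hC⟩ := ih
    refine ⟨κ i * M * C + M, fun θ hθ z => (norm_reluNet_succ_le hθ z i).trans ?_⟩
    have hM : 0 ≤ M := (norm_nonneg θ).trans hθ
    calc κ i * M * ‖reluNet κ n θ z i‖ + M ≤ κ i * M * (C * (1 + ‖z‖)) + M * (1 + ‖z‖) := by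
          gcongr
          · exact hC θ hθ z
          · exact le_mul_of_one_le_right hM (le_add_of_nonneg_right (norm_nonneg z))
      _ = (κ i * M * C + M) * (1 + ‖z‖) := by ring

lemma exists_norm_reluNet_sub_le (M : ℝ) (i : ℕ) :
    ∃ L, ∀ θ₁ θ₂ : NNParams κ n, ‖θ₁‖ ≤ M → ‖θ₂‖ ≤ M → ∀ z,
      ‖reluNet κ n θ₁ z i - reluNet κ n θ₂ z i‖ ≤ L * (1 + ‖z‖) * ‖θ₁ - θ₂‖ := by
  induction i with
  | zero => exact ⟨0, fun θ₁ θ₂ _ _ z => by simp [reluNet_zero]⟩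
  | succ i ih =>
    obtain ⟨C, hC⟩ := exists_norm_reluNet_le (κ := κ) (n := n) M i
    obtain ⟨L, hL⟩ := ih
    refine ⟨κ i * (C + M * L) + 1, fun θ₁ θ₂ h₁ h₂ z =>
      (norm_reluNet_succ_sub_le θ₁ h₂ z i).trans ?_⟩
    have hM : 0 ≤ M := (norm_nonneg θ₂).trans h₂
    calc κ i * (‖θ₁ - θ₂‖ * ‖reluNet κ n θ₁ z i‖
            + M * ‖reluNet κ n θ₁ z i - reluNet κ n θ₂ z i‖) + ‖θ₁ - θ₂‖
        ≤ κ i * (‖θ₁ - θ₂‖ * (C * (1 + ‖z‖)) + M * (L * (1 + ‖z‖) * ‖θ₁ - θ₂‖))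
            + ‖θ₁ - θ₂‖ * (1 + ‖z‖) := by
          gcongr
          · exact hC θ₁ h₁ z
          · exact hL θ₁ θ₂ h₁ h₂ z
          · exact le_mul_of_one_le_right (norm_nonneg _) (le_add_of_nonneg_right (norm_nonneg z))
      _ = (κ i * (C + M * L) + 1) * (1 + ‖z‖) * ‖θ₁ - θ₂‖ := by ring

end Network

section SquaredError

variable {m : ℕ}

lemma sum_sq_sub_le (a f : Fin m → ℝ) :
    ∑ j, (a j - f j) ^ 2 ≤ 2 * m * ‖a‖ ^ 2 + 2 * ∑ j, f j ^ 2 := by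
  calc ∑ j, (a j - f j) ^ 2 ≤ ∑ j, (2 * ‖a‖ ^ 2 + 2 * f j ^ 2) := by
        refine Finset.sum_le_sum fun j _ => ?_
        have ha : a j ^ 2 ≤ ‖a‖ ^ 2 := by
          simpa only [Real.norm_eq_abs, sq_abs] using
            pow_le_pow_left₀ (norm_nonneg _) (norm_le_pi_norm a j) 2
        nlinarith [sq_nonneg (a j + f j)]
    _ = 2 * m * ‖a‖ ^ 2 + 2 * ∑ j, f j ^ 2 := by
        simp only [Finset.sum_add_distrib, ← Finset.mul_sum, Finset.sum_const, Finset.card_univ,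
          Fintype.card_fin, nsmul_eq_mul]
        ring

lemma abs_sum_sq_sub_sub_sum_sq_sub_le (a b f : Fin m → ℝ) :
    |∑ j, (a j - f j) ^ 2 - ∑ j, (b j - f j) ^ 2|
      ≤ ‖a - b‖ * (m * (‖a‖ + ‖b‖ + 1) + ∑ j, f j ^ 2) := by
  rw [← Finset.sum_sub_distrib]
  refine (Finset.abs_sum_le_sum_abs _ _).trans ?_
  calc ∑ j, |(a j - f j) ^ 2 - (b j - f j) ^ 2|
      ≤ ∑ j, ‖a - b‖ * (‖a‖ + ‖b‖ + 1 + f j ^ 2) := by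
        refine Finset.sum_le_sum fun j _ => ?_
        rw [show (a j - f j) ^ 2 - (b j - f j) ^ 2 = (a - b) j * (a j + b j - 2 * f j) by
          simp only [Pi.sub_apply]; ring, abs_mul]
        refine mul_le_mul (norm_le_pi_norm (a - b) j) ?_ (abs_nonneg _) (norm_nonneg _)
        -- bounding `|f j|` by `f j ^ 2` is what lets the moment hypotheses on `f̂` apply
        have hf : 2 * |f j| ≤ 1 + f j ^ 2 := by nlinarith [sq_nonneg (|f j| - 1), sq_abs (f j)]
        have ha := norm_le_pi_norm a j
        have hb := norm_le_pi_norm b j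
        rw [Real.norm_eq_abs] at ha hb
        calc |a j + b j - 2 * f j| ≤ |a j| + |b j| + 2 * |f j| := by
              have := abs_sub (a j + b j) (2 * f j)
              rw [abs_mul, abs_two] at this
              linarith [abs_add_le (a j) (b j)]
          _ ≤ ‖a‖ + ‖b‖ + 1 + f j ^ 2 := by linarith
    _ = ‖a - b‖ * (m * (‖a‖ + ‖b‖ + 1) + ∑ j, f j ^ 2) := by
        rw [← Finset.mul_sum, Finset.sum_add_distrib, Finset.sum_const, Finset.card_univ,
          Fintype.card_fin, nsmul_eq_mul]

end SquaredError

section Loss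

variable {κ : ℕ → ℕ} {n : ℕ} (fhat : (Fin (κ 0) → ℝ) → (Fin (κ n) → ℝ))

lemma exists_abs_reluLoss_le (M : ℝ) :
    ∃ A, ∀ θ : NNParams κ n, ‖θ‖ ≤ M → ∀ z,
      |reluLoss κ n fhat θ z| ≤ A * (1 + ‖z‖) ^ 2 + 2 * ∑ j, fhat z j ^ 2 := by
  obtain ⟨C, hC⟩ := exists_norm_reluNet_le (κ := κ) (n := n) M n
  refine ⟨2 * κ n * C ^ 2, fun θ hθ z => ?_⟩
  rw [reluLoss, abs_of_nonneg (Finset.sum_nonneg fun _ _ => sq_nonneg _)]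
  refine (sum_sq_sub_le _ _).trans ?_
  calc 2 * κ n * ‖reluNet κ n θ z n‖ ^ 2 + 2 * ∑ j, fhat z j ^ 2
      ≤ 2 * κ n * (C * (1 + ‖z‖)) ^ 2 + 2 * ∑ j, fhat z j ^ 2 := by
        gcongr
        exact hC θ hθ z
    _ = 2 * κ n * C ^ 2 * (1 + ‖z‖) ^ 2 + 2 * ∑ j, fhat z j ^ 2 := by ring

lemma exists_abs_reluLoss_sub_le (M : ℝ) :
    ∃ L A, ∀ θ₁ θ₂ : NNParams κ n, ‖θ₁‖ ≤ M → ‖θ₂‖ ≤ M → ∀ z,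
      |reluLoss κ n fhat θ₁ z - reluLoss κ n fhat θ₂ z|
        ≤ L * (1 + ‖z‖) * (A * (1 + ‖z‖) + ∑ j, fhat z j ^ 2) * ‖θ₁ - θ₂‖ := by
  obtain ⟨C, hC⟩ := exists_norm_reluNet_le (κ := κ) (n := n) M n
  obtain ⟨L, hL⟩ := exists_norm_reluNet_sub_le (κ := κ) (n := n) M n
  refine ⟨L, κ n * (2 * C + 1), fun θ₁ θ₂ h₁ h₂ z => ?_⟩
  have hz : 1 ≤ 1 + ‖z‖ := le_add_of_nonneg_right (norm_nonneg z)
  have hsum : ‖reluNet κ n θ₁ z n‖ + ‖reluNet κ n θ₂ z n‖ + 1 ≤ (2 * C + 1) * (1 + ‖z‖) := by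
    linarith [hC θ₁ h₁ z, hC θ₂ h₂ z]
  refine (abs_sum_sq_sub_sub_sum_sq_sub_le _ _ _).trans ?_
  calc ‖reluNet κ n θ₁ z n - reluNet κ n θ₂ z n‖
        * (κ n * (‖reluNet κ n θ₁ z n‖ + ‖reluNet κ n θ₂ z n‖ + 1) + ∑ j, fhat z j ^ 2)
      ≤ (L * (1 + ‖z‖) * ‖θ₁ - θ₂‖) * (κ n * ((2 * C + 1) * (1 + ‖z‖)) + ∑ j, fhat z j ^ 2) := by
        have := hL θ₁ θ₂ h₁ h₂ z
        gcongr
        exact (norm_nonneg _).trans this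
    _ = L * (1 + ‖z‖) * (κ n * (2 * C + 1) * (1 + ‖z‖) + ∑ j, fhat z j ^ 2) * ‖θ₁ - θ₂‖ := by
        ring

end Loss

section Regularity

variable {κ : ℕ → ℕ} {n : ℕ}

lemma continuous_reluNet (θ : NNParams κ n) (i : ℕ) (j : Fin (κ i)) :
    Continuous fun z => reluNet κ n θ z i j := by
  induction i with
  | zero => exact continuous_apply j
  | succ i ih =>
    by_cases h : i < n
    · have hpre : Continuous fun z => reluPreact θ z i h j :=
        (continuous_finsetSum _ fun l _ => continuous_const.mul (ih l)).add continuous_const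
      simp_rw [reluNet_succ_of_lt θ _ h]
      split_ifs
      · exact continuous_const.max hpre
      · exact hpre
    · simp_rw [reluNet_succ_of_not_lt θ _ h]
      exact continuous_const

lemma measurable_reluLoss {fhat : (Fin (κ 0) → ℝ) → (Fin (κ n) → ℝ)} (hfhat : Measurable fhat)
    (θ : NNParams κ n) : Measurable (reluLoss κ n fhat θ) :=
  Finset.measurable_sum _ fun j _ =>
    ((continuous_reluNet θ n j).measurable.sub ((measurable_pi_apply j).comp hfhat)).pow_const 2

lemma differentiableAt_max_zero {E : Type*} [NormedAddCommGroup E] [NormedSpace ℝ E]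
    {f : E → ℝ} {x : E} (hf : DifferentiableAt ℝ f x) (hx : f x ≠ 0) :
    DifferentiableAt ℝ (fun y => max 0 (f y)) x := by
  rcases hx.lt_or_gt with hneg | hpos
  · refine (differentiableAt_const 0).congr_of_eventuallyEq ?_
    filter_upwards [hf.continuousAt.eventually_lt continuousAt_const hneg] with y hy
    exact max_eq_left hy.le
  · refine hf.congr_of_eventuallyEq ?_
    filter_upwards [continuousAt_const.eventually_lt hf.continuousAt hpos] with y hy
    exact max_eq_right hy.le

lemma differentiableAt_reluNet {θ : NNParams κ n} {z : Fin (κ 0) → ℝ}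
    (hz : ∀ i (h : i < n), i + 2 ≤ n → ∀ j, reluPreact θ z i h j ≠ 0) (i : ℕ) (j : Fin (κ i)) :
    DifferentiableAt ℝ (fun θ' => reluNet κ n θ' z i j) θ := by
  induction i with
  | zero => exact differentiableAt_const _
  | succ i ih =>
    by_cases h : i < n
    · have hpre : DifferentiableAt ℝ (fun θ' => reluPreact θ' z i h j) θ :=
        (DifferentiableAt.fun_sum fun l _ => (by fun_prop : DifferentiableAt ℝ
          (fun θ' : NNParams κ n => (θ' ⟨i, h⟩).1 j l) θ).mul (ih l)).add (by fun_prop)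
      simp_rw [reluNet_succ_of_lt _ z h]
      split_ifs with hhidden
      · exact differentiableAt_max_zero hpre (hz i h hhidden j)
      · exact hpre
    · simp_rw [reluNet_succ_of_not_lt _ z h]
      exact differentiableAt_const _

lemma differentiableAt_reluLoss (fhat : (Fin (κ 0) → ℝ) → (Fin (κ n) → ℝ))
    {θ : NNParams κ n} {z : Fin (κ 0) → ℝ}
    (hz : ∀ i (h : i < n), i + 2 ≤ n → ∀ j, reluPreact θ z i h j ≠ 0) :
    DifferentiableAt ℝ (fun θ' => reluLoss κ n fhat θ' z) θ :=
  DifferentiableAt.fun_sum fun j _ => ((differentiableAt_reluNet hz n j).sub_const _).pow 2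

end Regularity

theorem hasLineDerivAt_integral_reluLoss {κ : ℕ → ℕ} {n : ℕ}
    {fhat : (Fin (κ 0) → ℝ) → (Fin (κ n) → ℝ)} (hfhat : Measurable fhat)
    (hmom0 : Integrable (fun z => ∑ j, (fhat z j) ^ 2) (stdGaussian (κ 0)))
    (hmom1 : ∀ k : Fin (κ 0),
      Integrable (fun z => (∑ j, (fhat z j) ^ 2) * |z k|) (stdGaussian (κ 0)))
    {θ : NNParams κ n} (hθ : NonzeroPreact κ n θ) (v : NNParams κ n) :
    HasLineDerivAt ℝ (fun θ' => ∫ z, reluLoss κ n fhat θ' z ∂(stdGaussian (κ 0)))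
      (∫ z, lineDeriv ℝ (fun θ' => reluLoss κ n fhat θ' z) θ v ∂(stdGaussian (κ 0))) θ v := by
  have hball : ∀ θ' ∈ Metric.ball θ 1, ‖θ'‖ ≤ ‖θ‖ + 1 := fun θ' h =>
    norm_le_of_mem_closedBall (Metric.ball_subset_closedBall h)
  obtain ⟨A, hA⟩ := exists_abs_reluLoss_le fhat (‖θ‖ + 1)
  obtain ⟨L, B, hLB⟩ := exists_abs_reluLoss_sub_le fhat (‖θ‖ + 1)
  have hS := integrable_one_add_norm_sq_stdGaussian (κ 0)
  have hSQ := integrable_one_add_norm_mul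
    (fun z => Finset.sum_nonneg fun j _ => sq_nonneg (fhat z j)) hmom0 hmom1
  refine hasLineDerivAt_integral_of_dominated_loc_of_lip
    (bound := fun z => L * (1 + ‖z‖) * (B * (1 + ‖z‖) + ∑ j, fhat z j ^ 2))
    (Metric.ball_mem_nhds θ one_pos)
    (fun θ' => (measurable_reluLoss hfhat θ').aestronglyMeasurable) ?_
    (ae_of_all _ fun z => LipschitzOnWith.of_dist_le_mul fun θ₁ h₁ θ₂ h₂ => ?_) ?_
    (hθ.mono fun z hz => (differentiableAt_reluLoss fhat hz).lineDifferentiableAt)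
  · exact ((hS.const_mul A).add (hmom0.const_mul 2)).mono'
      (measurable_reluLoss hfhat θ).aestronglyMeasurable
      (ae_of_all _ (hA θ (hball θ (Metric.mem_ball_self one_pos))))
  · rw [Real.dist_eq, dist_eq_norm, Real.coe_nnabs]
    exact (hLB θ₁ θ₂ (hball θ₁ h₁) (hball θ₂ h₂) z).trans
      (mul_le_mul_of_nonneg_right (le_abs_self _) (norm_nonneg _))
  · exact ((hS.const_mul (L * B)).add (hSQ.const_mul L)).congr
      (ae_of_all _ fun z => by simp only [Pi.add_apply]; ring)

theorem stmt_11_general (κ : ℕ → ℕ) (n : ℕ)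
    (fhat : (Fin (κ 0) → ℝ) → (Fin (κ n) → ℝ)) (hfhat : Measurable fhat)
    (hmom0 : Integrable (fun z => ∑ j, (fhat z j) ^ 2) (stdGaussian (κ 0)))
    (hmom1 : ∀ k : Fin (κ 0),
      Integrable (fun z => (∑ j, (fhat z j) ^ 2) * |z k|) (stdGaussian (κ 0)))
    (Θ : Set (NNParams κ n))
    (hΘd : ∀ θ ∈ Θ, NonzeroPreact κ n θ) :
    ∀ θ ∈ Θ, ∀ i : Fin n,
      (∀ (j : Fin (κ (i.1 + 1))) (l : Fin (κ i.1)),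
        HasLineDerivAt ℝ (fun θ' => ∫ z, reluLoss κ n fhat θ' z ∂(stdGaussian (κ 0)))
          (∫ z, lineDeriv ℝ (fun θ' => reluLoss κ n fhat θ' z) θ
              (Pi.single i (Pi.single j (Pi.single l 1), 0)) ∂(stdGaussian (κ 0)))
          θ (Pi.single i (Pi.single j (Pi.single l 1), 0))) ∧
      (∀ j : Fin (κ (i.1 + 1)),
        HasLineDerivAt ℝ (fun θ' => ∫ z, reluLoss κ n fhat θ' z ∂(stdGaussian (κ 0)))
          (∫ z, lineDeriv ℝ (fun θ' => reluLoss κ n fhat θ' z) θ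
              (Pi.single i (0, Pi.single j 1)) ∂(stdGaussian (κ 0)))
          θ (Pi.single i (0, Pi.single j 1))) := fun θ hθ _ =>
  ⟨fun _ _ => hasLineDerivAt_integral_reluLoss hfhat hmom0 hmom1 (hΘd θ hθ) _,
    fun _ => hasLineDerivAt_integral_reluLoss hfhat hmom0 hmom1 (hΘd θ hθ) _⟩

/-- **Unbiasedness of the gradient estimator for the ReLU network (Theorem 2.5, item 1).**
For every `θ ∈ Θ` and every parameter component (an entry `(j,l)` of a weight matrix `W_i`
or an entry `j` of a bias `b_i`), the partial derivative of the expected loss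
`θ ↦ E_z[f(θ,z)]` in that coordinate direction exists and equals the expectation
`E_z[∂f/∂θ^k(θ,z)]` of the pointwise partial derivative (which exists for a.e. `z`). -/
theorem stmt_11 (κ : ℕ → ℕ) (n : ℕ) (hn : 1 ≤ n)
    (fhat : (Fin (κ 0) → ℝ) → (Fin (κ n) → ℝ)) (hfhat : Measurable fhat)
    (hmom0 : Integrable (fun z => ∑ j, (fhat z j) ^ 2) (stdGaussian (κ 0)))
    (hmom1 : ∀ k : Fin (κ 0),
      Integrable (fun z => (∑ j, (fhat z j) ^ 2) * |z k|) (stdGaussian (κ 0)))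
    (hmom2 : ∀ k : Fin (κ 0),
      Integrable (fun z => (∑ j, (fhat z j) ^ 2) * |z k| ^ 2) (stdGaussian (κ 0)))
    (hmom3 : ∀ k : Fin (κ 0),
      Integrable (fun z => Real.sqrt (∑ j, (fhat z j) ^ 2) * |z k| ^ 2) (stdGaussian (κ 0)))
    (hmom4 : ∀ k : Fin (κ 0),
      Integrable (fun z => (∑ j, (fhat z j) ^ 2) * |z k| ^ 3) (stdGaussian (κ 0)))
    (Θ : Set (NNParams κ n)) (hΘb : Bornology.IsBounded Θ) (hΘc : Convex ℝ Θ)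
    (hΘd : ∀ θ ∈ Θ, NonzeroPreact κ n θ) :
    ∀ θ ∈ Θ, ∀ i : Fin n,
      (∀ (j : Fin (κ (i.1 + 1))) (l : Fin (κ i.1)),
        HasLineDerivAt ℝ (fun θ' => ∫ z, reluLoss κ n fhat θ' z ∂(stdGaussian (κ 0)))
          (∫ z, lineDeriv ℝ (fun θ' => reluLoss κ n fhat θ' z) θ
              (Pi.single i (Pi.single j (Pi.single l 1), 0)) ∂(stdGaussian (κ 0)))
          θ (Pi.single i (Pi.single j (Pi.single l 1), 0))) ∧
      (∀ j : Fin (κ (i.1 + 1)),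
        HasLineDerivAt ℝ (fun θ' => ∫ z, reluLoss κ n fhat θ' z ∂(stdGaussian (κ 0)))
          (∫ z, lineDeriv ℝ (fun θ' => reluLoss κ n fhat θ' z) θ
              (Pi.single i (0, Pi.single j 1)) ∂(stdGaussian (κ 0)))
          θ (Pi.single i (0, Pi.single j 1))) :=
  stmt_11_general κ n fhat hfhat hmom0 hmom1 Θ hΘd
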